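/- Let H_4(y) = ((y+2)/2)·ln y − ((y+4)/2)·ln(y + 4(1 + √((4+y)/(2(y−2))))) + ln(2y + 4(y+4)(1 + √((4+y)/(2(y−2))))). Then H_4 is strictly increasing on [12, ∞), and H_4(3) < H_4(4) < H_4(5) < H_4(6) < H_4(7) < H_4(8) < H_4(9) < H_4(10) < H_4(11) < H_4(12); consequently, for every integer d2 ≥ 5, H_4(d2 − 2) < H_4(d2). -/

import Mathlib

/-- `H₄(y) = ((y+2)/2)·ln y − ((y+4)/2)·ln(y + 4(1 + √((4+y)/(2(y−2)))))
  + ln(2y + 4(y+4)(1 + √((4+y)/(2(y−2)))))`. -/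
noncomputable def H4 (y : ℝ) : ℝ :=
  (y + 2) / 2 * Real.log y -
    (y + 4) / 2 * Real.log (y + 4 * (1 + Real.sqrt ((4 + y) / (2 * (y - 2))))) +
    Real.log (2 * y + 4 * (y + 4) * (1 + Real.sqrt ((4 + y) / (2 * (y - 2)))))

/-!
`H4` is strictly increasing on all of `(2, ∞)`. With `r = √((4+y)/(2(y-2)))` and
`A = y + 4(1+r)`, its derivative is `(log y - log A)/2` plus a rational function of `y` and `r`.
Since `log t ≤ (t - t⁻¹)/2` for `t ≥ 1`, the logarithmic part is at least `-(A/y - y/A)/4`, and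
modulo `2r²(y-2) = 4+y` the resulting rational lower bound has numerator
`8 (y(y-5)(y+4) + r((y-2)³+72))`, which is positive: trivially for `y ≥ 5`, and for `y ≤ 5`
because then `r ≥ 1`.
-/

open Real Set

theorem Real.log_le_sub_inv_div_two {t : ℝ} (ht : 1 ≤ t) : log t ≤ (t - t⁻¹) / 2 := by
  rw [← sinh_log (by positivity)]
  exact self_le_sinh_iff.mpr (log_nonneg ht)

namespace H4

noncomputable def root (y : ℝ) : ℝ := √((4 + y) / (2 * (y - 2)))

noncomputable def derivRational (y r : ℝ) : ℝ :=
  (y + 2) / (2 * y) - (y + 4 - 12 * r / (y - 2)) / (2 * (y + 4 * (1 + r))) +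
    (6 + 4 * r - 12 * r / (y - 2)) / (2 * y + 4 * (y + 4) * (1 + r))

variable {y r : ℝ}

lemma deriv_numerator_pos (hy : 2 < y) (hr : 0 < r) (hr2 : r ^ 2 * (2 * (y - 2)) = 4 + y) :
    0 < y * (y - 5) * (y + 4) + r * ((y - 2) ^ 3 + 72) := by
  have hy2 : 0 < y - 2 := by linarith
  rcases le_or_gt y 5 with h5 | h5
  · have hr1 : 1 ≤ r := by nlinarith
    nlinarith [mul_le_mul_of_nonneg_right hr1 (by positivity : (0 : ℝ) ≤ (y - 2) ^ 3 + 72),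
      pow_pos hy2 3, sq_nonneg (y - 16 / 5)]
  · have : 0 < y * (y - 5) * (y + 4) := by
      have : 0 < y - 5 := by linarith
      positivity
    positivity

lemma lt_derivRational (hy : 2 < y) (hr : 0 < r) (hr2 : r ^ 2 * (2 * (y - 2)) = 4 + y) :
    ((y + 4 * (1 + r)) / y - y / (y + 4 * (1 + r))) / 4 < derivRational y r := by
  have hy2 : 0 < y - 2 := by linarith
  have hK := deriv_numerator_pos hy hr hr2
  have : derivRational y r - ((y + 4 * (1 + r)) / y - y / (y + 4 * (1 + r))) / 4 =
      8 * (y * (y - 5) * (y + 4) + r * ((y - 2) ^ 3 + 72)) /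
        (y * (y + 4 * (1 + r)) * (2 * y + 4 * (y + 4) * (1 + r)) * (y - 2) ^ 2 * r) := by
    rw [derivRational]
    field_simp
    linear_combination
      (1024 * r + 512 * r ^ 2 - 320 * y - 128 * y * r - 128 * y * r ^ 2 + 64 * y ^ 2 -
        64 * y ^ 2 * r ^ 2) * hr2
  rw [← sub_pos, this]
  positivity

lemma root_pos (hy : 2 < y) : 0 < root y :=
  sqrt_pos.mpr (div_pos (by linarith) (by linarith))

lemma sq_root_mul (hy : 2 < y) : root y ^ 2 * (2 * (y - 2)) = 4 + y := by
  rw [root, sq_sqrt (div_pos (by linarith) (by linarith)).le]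
  field_simp [show y - 2 ≠ 0 by linarith]

lemma hasDerivAt_root (hy : 2 < y) :
    HasDerivAt root (-(3 * root y) / ((y + 4) * (y - 2))) y := by
  have hy2 : y - 2 ≠ 0 := by linarith
  have hquot : HasDerivAt (fun x ↦ (4 + x) / (2 * (x - 2)))
      ((1 * (2 * (y - 2)) - (4 + y) * (2 * 1)) / (2 * (y - 2)) ^ 2) y :=
    ((hasDerivAt_id' y).const_add 4).div (((hasDerivAt_id' y).sub_const 2).const_mul 2)
      (by simpa using hy2)
  refine (hquot.sqrt (div_pos (by linarith) (by linarith)).ne').congr_deriv ?_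
  have hsq := sq_root_mul hy
  have := (root_pos hy).ne'
  rw [← root]
  field_simp
  linear_combination 6 * hsq

lemma hasDerivAt (hy : 2 < y) :
    HasDerivAt H4
      ((log y - log (y + 4 * (1 + root y))) / 2 + derivRational y (root y)) y := by
  have hr := root_pos hy
  have hA : 0 < y + 4 * (1 + root y) := by positivity
  have hB : 0 < 2 * y + 4 * (y + 4) * (1 + root y) := by positivity
  have hroot := hasDerivAt_root hy
  have hlogA : HasDerivAt (fun x ↦ log (x + 4 * (1 + root x)))
      ((1 + 4 * (-(3 * root y) / ((y + 4) * (y - 2)))) / (y + 4 * (1 + root y))) y :=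
    ((hasDerivAt_id' y).add ((hroot.const_add 1).const_mul 4)).log hA.ne'
  have hlogB : HasDerivAt (fun x ↦ log (2 * x + 4 * (x + 4) * (1 + root x)))
      ((2 * 1 + (4 * 1 * (1 + root y) + 4 * (y + 4) * (-(3 * root y) / ((y + 4) * (y - 2))))) /
        (2 * y + 4 * (y + 4) * (1 + root y))) y :=
    (((hasDerivAt_id' y).const_mul 2).add
      ((((hasDerivAt_id' y).add_const 4).const_mul 4).mul (hroot.const_add 1))).log hB.ne'
  refine (((((hasDerivAt_id' y).add_const 2).div_const 2).mul
    (hasDerivAt_log (by positivity))).sub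
    ((((hasDerivAt_id' y).add_const 4).div_const 2).mul hlogA) |>.add hlogB).congr_deriv ?_
  have : y - 2 ≠ 0 := by linarith
  rw [derivRational]
  field_simp
  ring

lemma deriv_pos (hy : 2 < y) : 0 < deriv H4 y := by
  rw [(hasDerivAt hy).deriv]
  have hy0 : 0 < y := by linarith
  have hr := root_pos hy
  have hA : 0 < y + 4 * (1 + root y) := by positivity
  have hlog := log_le_sub_inv_div_two ((one_le_div hy0).mpr (by linarith) :
    1 ≤ (y + 4 * (1 + root y)) / y)
  rw [log_div hA.ne' hy0.ne', inv_div] at hlog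
  linarith [lt_derivRational hy hr (sq_root_mul hy)]

theorem strictMonoOn_Ioi_two : StrictMonoOn H4 (Ioi 2) :=
  strictMonoOn_of_deriv_pos (convex_Ioi 2)
    (fun _ hx ↦ (hasDerivAt hx).continuousAt.continuousWithinAt)
    (fun _ hx ↦ deriv_pos (by simpa using hx))

end H4

theorem H4_increasing :
    StrictMonoOn H4 (Set.Ici (12 : ℝ)) ∧
      H4 3 < H4 4 ∧ H4 4 < H4 5 ∧ H4 5 < H4 6 ∧ H4 6 < H4 7 ∧ H4 7 < H4 8 ∧
      H4 8 < H4 9 ∧ H4 9 < H4 10 ∧ H4 10 < H4 11 ∧ H4 11 < H4 12 ∧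
      ∀ d2 : ℕ, 5 ≤ d2 → H4 ((d2 : ℝ) - 2) < H4 (d2 : ℝ) := by
  have h := H4.strictMonoOn_Ioi_two
  have step {a b : ℝ} (ha : 2 < a) (hab : a < b) : H4 a < H4 b := h ha (ha.trans hab) hab
  have two_lt {d2 : ℕ} (hd2 : 5 ≤ d2) : (2 : ℝ) < d2 - 2 := by
    have : (5 : ℝ) ≤ d2 := by exact_mod_cast hd2
    linarith
  refine ⟨h.mono (Ici_subset_Ioi.mpr (by norm_num)), ?_, ?_, ?_, ?_, ?_, ?_, ?_, ?_, ?_,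
    fun d2 hd2 ↦ step (two_lt hd2) (by linarith)⟩
  all_goals exact step (by norm_num) (by norm_num)
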